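/- Let u: ℤ² → ℝ satisfy: (i) D1u is constant equal to k1 (where D1u_{m,n} = u_{m+1,n} − u_{m,n}), and (ii) the circle packing angle-sum equation holds at every vertex of the hexagonal lattice with radii r_{m,n} = e^{u_{m,n}}. Then D2u (where D2u_{m,n} = u_{m,n+1} − u_{m,n}) is also constant, and hence u_{m,n} = u_{0,0} + k1·m + k2·n for constants k1, k2; i.e., the packing is a Doyle spiral. -/

import Mathlib

/-!
Normalise the radius at a vertex to `1` and write `x = D2u(m,n)`, `y = D2u(m,n-1)`. When
`D1u ≡ k1`, the three angles at the vertex in the faces above its row depend only on `x`, the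
three below only on `y`. For `y = x` the six angles are, after rescaling, exactly the angles of
two triangles, so they sum to `2π`; and the lower three strictly decrease in `y`, because an
angle grows with the radii of the two neighbours spanning it. So the angle-sum equation forces
`y = x`: `D2u` is constant along each column, and `u` is affine.
-/

open Real EuclideanGeometry

/-- Inner angle at the vertex of radius `a` in the triangle with side lengths
`a+b, a+c, b+c` formed by three mutually externally tangent circles. -/
noncomputable def ang (a b c : ℝ) : ℝ :=
  Real.arccos (((a + b) ^ 2 + (a + c) ^ 2 - (b + c) ^ 2) / (2 * (a + b) * (a + c)))

theorem exists_dist_eq_of_triangle {p q r : ℝ} (hp : 0 < p) (hq : 0 ≤ q) (hr : 0 ≤ r)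
    (hpq : p ≤ q + r) (hqr : q ≤ p + r) (hrp : r ≤ p + q) :
    ∃ A B C : ℂ, dist B A = p ∧ dist C A = q ∧ dist B C = r := by
  set x := (p ^ 2 + q ^ 2 - r ^ 2) / (2 * p)
  have hx : x ^ 2 ≤ q ^ 2 := by
    rw [div_pow, div_le_iff₀ (by positivity)]
    nlinarith [mul_nonneg (mul_nonneg (sub_nonneg.2 hpq) (sub_nonneg.2 hqr))
      (mul_nonneg (sub_nonneg.2 hrp) (by positivity : 0 ≤ p + q + r))]
  set y := √(q ^ 2 - x ^ 2)
  have hy : y ^ 2 = q ^ 2 - x ^ 2 := sq_sqrt (sub_nonneg.2 hx)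
  refine ⟨0, p, x + y * Complex.I, ?_, ?_, ?_⟩
  · simp [hp.le]
  · rw [dist_zero_right, Complex.norm_add_mul_I, hy, add_sub_cancel, sqrt_sq hq]
  · have hpC : (p : ℂ) - (x + y * Complex.I) = ((p - x : ℝ) : ℂ) + ((-y : ℝ) : ℂ) * Complex.I := by
      push_cast
      ring
    have hr2 : (p - x) ^ 2 + (-y) ^ 2 = r ^ 2 := by
      rw [neg_sq, hy]
      simp only [x]
      field_simp
      ring
    rw [Complex.dist_eq, hpC, Complex.norm_add_mul_I, hr2, sqrt_sq hr]

theorem ang_mul (t a b c : ℝ) (ht : t ≠ 0) : ang (t * a) (t * b) (t * c) = ang a b c := by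
  unfold ang
  congr 1
  rw [show (t * a + t * b) ^ 2 + (t * a + t * c) ^ 2 - (t * b + t * c) ^ 2
      = t ^ 2 * ((a + b) ^ 2 + (a + c) ^ 2 - (b + c) ^ 2) by ring,
    show 2 * (t * a + t * b) * (t * a + t * c) = t ^ 2 * (2 * (a + b) * (a + c)) by ring,
    mul_div_mul_left _ _ (pow_ne_zero 2 ht)]

theorem ang_comm (a b c : ℝ) : ang a b c = ang a c b := by
  unfold ang
  ring_nf

theorem ang_exp (c p q : ℝ) :
    ang (exp c) (exp p) (exp q) = ang 1 (exp (p - c)) (exp (q - c)) := by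
  rw [← ang_mul (exp c) 1 _ _ (exp_ne_zero c), mul_one, ← exp_add, ← exp_add, add_sub_cancel,
    add_sub_cancel]

theorem ang_eq_angle {a b c : ℝ} {A B C : ℂ} (hab : 0 < a + b) (hac : 0 < a + c)
    (hB : dist B A = a + b) (hC : dist C A = a + c) (hBC : dist B C = b + c) :
    ang a b c = ∠ B A C := by
  have hcos : cos (∠ B A C) =
      ((a + b) ^ 2 + (a + c) ^ 2 - (b + c) ^ 2) / (2 * (a + b) * (a + c)) := by
    have h := law_cos B A C
    rw [hB, hC, hBC] at h
    field_simp
    linarith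
  rw [ang, ← hcos, arccos_cos (angle_nonneg _ _ _) (angle_le_pi _ _ _)]

theorem ang_add_ang_add_ang {a b c : ℝ} (ha : 0 < a) (hb : 0 < b) (hc : 0 < c) :
    ang a b c + ang b c a + ang c a b = π := by
  obtain ⟨A, B, C, hB, hC, hBC⟩ :=
    exists_dist_eq_of_triangle (p := a + b) (q := a + c) (r := b + c) (by positivity)
      (by positivity) (by positivity) (by linarith) (by linarith) (by linarith)
  have hBA : B ≠ A := by
    rintro rfl
    rw [dist_self] at hB
    linarith
  have e1 : ang a b c = ∠ B A C := ang_eq_angle (by positivity) (by positivity) hB hC hBC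
  have e2 : ang b c a = ∠ C B A :=
    ang_eq_angle (by positivity) (by positivity) (by rw [dist_comm, hBC])
      (by rw [dist_comm, hB, add_comm]) (by rw [hC, add_comm])
  have e3 : ang c a b = ∠ A C B :=
    ang_eq_angle (by positivity) (by positivity) (by rw [dist_comm, hC, add_comm])
      (by rw [hBC, add_comm]) (by rw [dist_comm, hB])
  rw [e1, e2, e3, angle_comm B A C, angle_comm C B A, angle_comm A C B]
  linarith [angle_add_angle_add_angle_eq_pi C hBA]

theorem ang_arg_mem_Icc {a b c : ℝ} (ha : 0 < a) (hb : 0 < b) (hc : 0 < c) :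
    ((a + b) ^ 2 + (a + c) ^ 2 - (b + c) ^ 2) / (2 * (a + b) * (a + c)) ∈ Set.Icc (-1) 1 := by
  have hD : 0 < 2 * (a + b) * (a + c) := by positivity
  constructor
  · rw [le_div_iff₀ hD]; nlinarith [mul_pos ha (by positivity : 0 < a + b + c)]
  · rw [div_le_one hD]; nlinarith [mul_pos hb hc]

theorem ang_lt_ang_of_snd_lt {a b b' c : ℝ} (ha : 0 < a) (hb : 0 < b) (hc : 0 < c)
    (hbb' : b < b') :
    ang a b c < ang a b' c := by
  have hb' : 0 < b' := hb.trans hbb'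
  refine strictAntiOn_arccos (ang_arg_mem_Icc ha hb' hc) (ang_arg_mem_Icc ha hb hc) ?_
  rw [div_lt_div_iff₀ (by positivity) (by positivity)]
  nlinarith [mul_pos (mul_pos (mul_pos ha hc) (by positivity : 0 < a + c)) (sub_pos.2 hbb')]

theorem ang_lt_ang_of_thd_lt {a b c c' : ℝ} (ha : 0 < a) (hb : 0 < b) (hc : 0 < c)
    (hcc' : c < c') :
    ang a b c < ang a b c' := by
  rw [ang_comm a b c, ang_comm a b c']
  exact ang_lt_ang_of_snd_lt ha hc hb hcc'

/-- The circle packing angle-sum condition at the vertex `(m,n)` of the hexagonal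
lattice for radii `r`: the six inner angles at `(m,n)` in the six incident triangles
sum to `2π`. -/
noncomputable def packingEq (r : ℤ × ℤ → ℝ) (m n : ℤ) : Prop :=
  ang (r (m, n)) (r (m + 1, n)) (r (m, n + 1)) +
  ang (r (m, n)) (r (m, n + 1)) (r (m - 1, n + 1)) +
  ang (r (m, n)) (r (m - 1, n + 1)) (r (m - 1, n)) +
  ang (r (m, n)) (r (m - 1, n)) (r (m, n - 1)) +
  ang (r (m, n)) (r (m, n - 1)) (r (m + 1, n - 1)) +
  ang (r (m, n)) (r (m + 1, n - 1)) (r (m + 1, n)) = 2 * Real.pi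

/-- Log-radii are taken relative to the centre, which has radius `1`: the row through the centre
has step `k`, and the vertex above the centre has log-radius `x`. -/
noncomputable def upperAngleSum (k x : ℝ) : ℝ :=
  ang 1 (exp k) (exp x) + ang 1 (exp x) (exp (x - k)) + ang 1 (exp (x - k)) (exp (-k))

/-- As `upperAngleSum`, for the three faces below the row, the vertex below the centre having
log-radius `-y`. -/
noncomputable def lowerAngleSum (k y : ℝ) : ℝ :=
  ang 1 (exp (-k)) (exp (-y)) + ang 1 (exp (-y)) (exp (k - y)) + ang 1 (exp (k - y)) (exp k)

/-- The six angles are those of the two faces with log-radii `(0, k, x)` and `(0, x, x - k)`. -/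
theorem upperAngleSum_add_lowerAngleSum_self (k x : ℝ) :
    upperAngleSum k x + lowerAngleSum k x = 2 * π := by
  have h₁ := ang_add_ang_add_ang (exp_pos 0) (exp_pos k) (exp_pos x)
  have h₂ := ang_add_ang_add_ang (exp_pos 0) (exp_pos x) (exp_pos (x - k))
  simp only [ang_exp, sub_zero, zero_sub, neg_sub, sub_sub_cancel, sub_sub_cancel_left] at h₁ h₂
  rw [upperAngleSum, lowerAngleSum]
  linarith

theorem lowerAngleSum_strictAnti (k : ℝ) : StrictAnti (lowerAngleSum k) := by
  intro y y' hyy'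
  have h₁ : exp (-y') < exp (-y) := exp_lt_exp.2 (by linarith)
  have h₂ : exp (k - y') < exp (k - y) := exp_lt_exp.2 (by linarith)
  have := ang_lt_ang_of_thd_lt one_pos (exp_pos (-k)) (exp_pos _) h₁
  have := ang_lt_ang_of_snd_lt one_pos (exp_pos _) (exp_pos (k - y')) h₁
  have := ang_lt_ang_of_thd_lt one_pos (exp_pos (-y)) (exp_pos _) h₂
  have := ang_lt_ang_of_snd_lt one_pos (exp_pos _) (exp_pos k) h₂
  rw [lowerAngleSum, lowerAngleSum]
  linarith

theorem sub_eq_sub_of_packingEq {u : ℤ × ℤ → ℝ} {k : ℝ}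
    (hD1 : ∀ m n, u (m + 1, n) - u (m, n) = k) {m n : ℤ} (h : packingEq (fun v => exp (u v)) m n) :
    u (m, n) - u (m, n - 1) = u (m, n + 1) - u (m, n) := by
  have h₁ := hD1 (m - 1) n
  have h₂ := hD1 (m - 1) (n + 1)
  have h₃ := hD1 m (n - 1)
  rw [sub_add_cancel] at h₁ h₂
  set x := u (m, n + 1) - u (m, n) with hx
  set y := u (m, n) - u (m, n - 1) with hy
  rw [packingEq] at h
  simp only [ang_exp] at h
  rw [hD1, show u (m - 1, n) - u (m, n) = -k by linarith,
    show u (m - 1, n + 1) - u (m, n) = x - k by linarith,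
    show u (m, n - 1) - u (m, n) = -y by linarith,
    show u (m + 1, n - 1) - u (m, n) = k - y by linarith] at h
  refine (lowerAngleSum_strictAnti k).injective ?_
  have := upperAngleSum_add_lowerAngleSum_self k x
  simp only [upperAngleSum, lowerAngleSum] at this ⊢
  linarith

theorem eq_add_mul_of_sub_eq {f : ℤ → ℝ} {k : ℝ} (h : ∀ n, f (n + 1) - f n = k) (n : ℤ) :
    f n = f 0 + k * n := by
  have hf : ∀ n, f (n + 1) = f n + k := fun n => by rw [← h n]; ring
  simpa [mul_comm] using
    AddConstMapClass.map_add_int' (AddConstMap.mk f hf : AddConstMap ℤ ℝ 1 k) 0 n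

/-- If the horizontal difference `D1 u` is constant and the angle-sum equation holds at
every vertex for radii `e^u`, then the vertical difference `D2 u` is also constant, so
`u` is linear and the packing is a Doyle spiral. -/
theorem stmt_15 (u : ℤ × ℤ → ℝ) (k1 : ℝ)
    (hD1 : ∀ m n : ℤ, u (m + 1, n) - u (m, n) = k1)
    (hpack : ∀ m n : ℤ, packingEq (fun v => Real.exp (u v)) m n) :
    ∃ k2 : ℝ, (∀ m n : ℤ, u (m, n + 1) - u (m, n) = k2) ∧
      ∀ m n : ℤ, u (m, n) = u (0, 0) + k1 * m + k2 * n := by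
  have hrow (m n : ℤ) : u (m, n) = u (0, n) + k1 * m :=
    eq_add_mul_of_sub_eq (f := fun m => u (m, n)) (hD1 · n) m
  set k2 := u (0, 1) - u (0, 0)
  have hD2 (n : ℤ) : u (0, n + 1) - u (0, n) = k2 := by
    have := eq_add_mul_of_sub_eq (f := fun n => u (0, n + 1) - u (0, n)) (k := 0) (fun n => by
      have := sub_eq_sub_of_packingEq hD1 (hpack 0 (n + 1))
      rw [add_sub_cancel_right] at this
      linarith) n
    simpa using this
  refine ⟨k2, fun m n => ?_, fun m n => ?_⟩
  · rw [hrow m (n + 1), hrow m n, ← hD2 n]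
    ring
  · rw [hrow m n, eq_add_mul_of_sub_eq (f := fun n => u (0, n)) hD2 n]
    ring
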